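/- For every positive integer n, S_q(q^n) = -n + (q;q)_∞ · ∑_{k=0}^{n-1} 1/(q;q)_k, where 0 < q < 1. -/

import Mathlib

noncomputable def qPoch (q x : ℂ) (k : ℕ) : ℂ := ∏ j ∈ Finset.range k, (1 - x * q ^ j)

noncomputable def Sq (q : ℝ) (x : ℂ) : ℂ :=
  -∑' k : ℕ, ((q : ℂ) ^ (k + 1) / (1 - (q : ℂ) ^ (k + 1))) * qPoch q x (k + 1)

/-!
Write `f n = -S_q(q^n) = ∑_{k ≥ 1} q^k/(1-q^k) (q^n;q)_k`. Since `(1;q)_k = 0` for `k ≥ 1`,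
`f 0 = 0`. The identity `(q^{n+1};q)_k - (q^n;q)_k = q^n (1 - q^k) (q^{n+1};q)_{k-1}` shows that
`f (n+1) - f n = ∑_{k ≥ 0} x q^k (x;q)_k` with `x = q^{n+1}`, a telescoping series
(`x q^k (x;q)_k = (x;q)_k - (x;q)_{k+1}`) with value `1 - (q^{n+1};q)_∞ = 1 - (q;q)_∞/(q;q)_n`.
Summing over `n` gives the formula.
-/

open Filter Finset Topology

section QPochhammer

variable (q x : ℂ) (k : ℕ)

lemma qPoch_succ : qPoch q x (k + 1) = qPoch q x k * (1 - x * q ^ k) :=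
  prod_range_succ _ _

lemma qPoch_succ' : qPoch q x (k + 1) = (1 - x) * qPoch q (x * q) k := by
  rw [qPoch, prod_range_succ', mul_comm, qPoch]
  simp only [pow_zero, mul_one, pow_succ', mul_assoc]

lemma qPoch_add (m : ℕ) : qPoch q x (m + k) = qPoch q x m * qPoch q (x * q ^ m) k := by
  simp only [qPoch, prod_range_add, pow_add, mul_assoc, mul_comm (q ^ m)]

lemma qPoch_one_succ : qPoch q 1 (k + 1) = 0 := by
  simp [qPoch_succ']

lemma qPoch_self : qPoch q q k = ∏ j ∈ range k, (1 - q ^ (j + 1)) := by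
  simp only [qPoch, pow_succ']

lemma qPoch_sub_qPoch_succ : qPoch q x k - qPoch q x (k + 1) = x * q ^ k * qPoch q x k := by
  rw [qPoch_succ]; ring

lemma qPoch_mul_succ_sub_qPoch_succ :
    qPoch q (x * q) (k + 1) - qPoch q x (k + 1) = x * (1 - q ^ (k + 1)) * qPoch q (x * q) k := by
  rw [qPoch_succ, qPoch_succ']; ring

end QPochhammer

section UnitDisc

variable {q : ℂ}

lemma one_sub_pow_ne_zero (hq : ‖q‖ < 1) {m : ℕ} (hm : m ≠ 0) : 1 - q ^ m ≠ 0 := by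
  rw [sub_ne_zero]
  intro h
  have := pow_lt_one₀ (norm_nonneg q) hq hm
  rw [← norm_pow, ← h, norm_one] at this
  exact lt_irrefl _ this

lemma qPoch_self_ne_zero (hq : ‖q‖ < 1) (n : ℕ) : qPoch q q n ≠ 0 := by
  rw [qPoch_self]
  exact prod_ne_zero_iff.mpr fun j _ => one_sub_pow_ne_zero hq j.succ_ne_zero

lemma hasSum_mul_pow_mul_qPoch (hq : ‖q‖ < 1) {x L : ℂ} (hL : Tendsto (qPoch q x) atTop (𝓝 L)) :
    HasSum (fun k => x * q ^ k * qPoch q x k) (1 - L) := by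
  obtain ⟨C, hC⟩ := (Metric.isBounded_range_of_tendsto _ hL).exists_norm_le
  have hsummable : Summable fun k => ‖x * q ^ k * qPoch q x k‖ := by
    refine .of_nonneg_of_le (fun _ => norm_nonneg _) (fun k => ?_)
      ((summable_geometric_of_lt_one (norm_nonneg q) hq).mul_left (‖x‖ * C))
    rw [norm_mul, norm_mul, norm_pow, mul_right_comm]
    gcongr
    exact hC _ ⟨k, rfl⟩
  rw [hasSum_iff_tendsto_nat_of_summable_norm hsummable]
  have hpartial : ∀ N, ∑ k ∈ range N, x * q ^ k * qPoch q x k = 1 - qPoch q x N := fun N => by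
    rw [← sum_congr rfl fun k _ => qPoch_sub_qPoch_succ q x k, sum_range_sub']
    simp [qPoch]
  simpa only [hpartial] using tendsto_const_nhds.sub hL

lemma tendsto_qPoch_pow_succ (hq : ‖q‖ < 1) (n : ℕ) :
    Tendsto (qPoch q (q ^ (n + 1))) atTop (𝓝 ((∏' j : ℕ, (1 - q ^ (j + 1))) / qPoch q q n)) := by
  have hlim : Tendsto (fun k => qPoch q q (n + k)) atTop (𝓝 (∏' j : ℕ, (1 - q ^ (j + 1)))) := by
    have := (ModularForm.multipliable_one_sub_pow hq).tendsto_prod_tprod_nat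
    simp only [← qPoch_self] at this
    exact (this.comp (tendsto_add_atTop_nat n)).congr fun k => by rw [Function.comp_apply, add_comm]
  refine (hlim.div_const (qPoch q q n)).congr fun k => ?_
  rw [qPoch_add, ← pow_succ', mul_div_cancel_left₀ _ (qPoch_self_ne_zero hq n)]

lemma hasSum_series_qPoch_pow (hq : ‖q‖ < 1) (n : ℕ) :
    HasSum (fun k => q ^ (k + 1) / (1 - q ^ (k + 1)) * qPoch q (q ^ n) (k + 1))
      (n - (∏' j : ℕ, (1 - q ^ (j + 1))) * ∑ k ∈ range n, (qPoch q q k)⁻¹) := by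
  induction n with
  | zero => simp [qPoch_one_succ]
  | succ n ih =>
    convert ih.add (hasSum_mul_pow_mul_qPoch hq (tendsto_qPoch_pow_succ hq n)) using 1
    · funext k
      have hk := one_sub_pow_ne_zero hq k.succ_ne_zero
      rw [← sub_eq_iff_eq_add', ← mul_sub, pow_succ q n, qPoch_mul_succ_sub_qPoch_succ]
      field_simp
      ring
    · rw [sum_range_succ]
      push_cast
      ring

end UnitDisc

theorem qlog_value_at_positive_powers_general (q : ℝ) (hq0 : 0 < q) (hq1 : q < 1)
    (n : ℕ) :
    Sq q ((q : ℂ) ^ n) = -(n : ℂ) +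
      (∏' j : ℕ, (1 - (q : ℂ) ^ (j + 1))) *
        ∑ k ∈ Finset.range n, 1 / ∏ j ∈ Finset.range k, (1 - (q : ℂ) ^ (j + 1)) := by
  have hq : ‖(q : ℂ)‖ < 1 := by
    rw [Complex.norm_real, Real.norm_eq_abs, abs_lt]
    constructor <;> linarith
  rw [Sq, (hasSum_series_qPoch_pow hq n).tsum_eq]
  simp only [qPoch_self, one_div]
  ring

theorem qlog_value_at_positive_powers (q : ℝ) (hq0 : 0 < q) (hq1 : q < 1)
    (n : ℕ) (hn : 1 ≤ n) :
    Sq q ((q : ℂ) ^ n) = -(n : ℂ) +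
      (∏' j : ℕ, (1 - (q : ℂ) ^ (j + 1))) *
        ∑ k ∈ Finset.range n, 1 / ∏ j ∈ Finset.range k, (1 - (q : ℂ) ^ (j + 1)) :=
  qlog_value_at_positive_powers_general q hq0 hq1 n
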